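/- arXiv:2605.17017 — 6 statements merged into one kernel-verified Lean document; each statement's English description precedes it below -/
import Mathlib

section
/- Let S and A be finite sets, let π be a policy, let T^o be a transition kernel, let μ be an initial distribution on S, and let γ ∈ [0,1). For every transition kernel T satisfying D_TV(T(·|s,a), T^o(·|s,a)) ≤ ε' for all (s,a) ∈ S × A, the discounted state-occupancy measures satisfy D_TV(ρ^π_T, ρ^π_{T^o}) ≤ γ·ε'/(1 − γ). -/
open Finset

/-- Policy-averaged transition matrix `P(s,s') = ∑ₐ π(a|s) T(s'|s,a)`. -/
noncomputable def Pmat {S A : Type*} [Fintype A] (π : S → A → ℝ) (T : S → A → S → ℝ) :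
    Matrix S S ℝ :=
  Matrix.of fun s s' => ∑ a, π s a * T s a s'

/-- Discounted state-occupancy measure
`ρ^π_T(s) = (1-γ) ∑ₜ γ^t (μ P^t)(s)`. -/
noncomputable def occ {S A : Type*} [Fintype S] [DecidableEq S] [Fintype A]
    (π : S → A → ℝ) (T : S → A → S → ℝ) (μ : S → ℝ) (γ : ℝ) (s : S) : ℝ :=
  (1 - γ) * ∑' t : ℕ, γ ^ t * Matrix.vecMul μ (Pmat π T ^ t) s

section Aux

variable {S : Type*} [Fintype S]

/-- ℓ¹ contraction for row-(sub)stochastic matrices. -/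
lemma l1_vecMul_le (M : Matrix S S ℝ) (hM0 : ∀ s s', 0 ≤ M s s')
    (hM1 : ∀ s, ∑ s', M s s' = 1) (d : S → ℝ) :
    ∑ s', |Matrix.vecMul d M s'| ≤ ∑ s, |d s| := by
  have h : ∀ s', |Matrix.vecMul d M s'| ≤ ∑ s, |d s| * M s s' := by
    intro s'
    have : Matrix.vecMul d M s' = ∑ s, d s * M s s' := by
      simp [Matrix.vecMul, dotProduct]
    rw [this]
    refine (Finset.abs_sum_le_sum_abs _ _).trans (le_of_eq ?_)
    refine Finset.sum_congr rfl fun s _ => ?_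
    rw [abs_mul, abs_of_nonneg (hM0 s s')]
  calc ∑ s', |Matrix.vecMul d M s'| ≤ ∑ s', ∑ s, |d s| * M s s' :=
        Finset.sum_le_sum fun s' _ => h s'
    _ = ∑ s, |d s| * ∑ s', M s s' := by
        rw [Finset.sum_comm]; exact Finset.sum_congr rfl fun s _ => (Finset.mul_sum _ _ _).symm
    _ = ∑ s, |d s| := by simp [hM1]

/-- ℓ¹ bound for a nonnegative vector against a matrix with row abs sums ≤ B. -/
lemma l1_vecMul_le' (M : Matrix S S ℝ) (B : ℝ) (hM : ∀ s, ∑ s', |M s s'| ≤ B)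
    (ν : S → ℝ) (hν0 : ∀ s, 0 ≤ ν s) :
    ∑ s', |Matrix.vecMul ν M s'| ≤ (∑ s, ν s) * B := by
  have h : ∀ s', |Matrix.vecMul ν M s'| ≤ ∑ s, ν s * |M s s'| := by
    intro s'
    have : Matrix.vecMul ν M s' = ∑ s, ν s * M s s' := by
      simp [Matrix.vecMul, dotProduct]
    rw [this]
    refine (Finset.abs_sum_le_sum_abs _ _).trans (le_of_eq ?_)
    refine Finset.sum_congr rfl fun s _ => ?_
    rw [abs_mul, abs_of_nonneg (hν0 s)]
  calc ∑ s', |Matrix.vecMul ν M s'| ≤ ∑ s', ∑ s, ν s * |M s s'| :=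
        Finset.sum_le_sum fun s' _ => h s'
    _ = ∑ s, ν s * ∑ s', |M s s'| := by
        rw [Finset.sum_comm]; exact Finset.sum_congr rfl fun s _ => (Finset.mul_sum _ _ _).symm
    _ ≤ ∑ s, ν s * B := Finset.sum_le_sum fun s _ =>
        mul_le_mul_of_nonneg_left (hM s) (hν0 s)
    _ = (∑ s, ν s) * B := (Finset.sum_mul _ _ _).symm

end Aux

/-- Lemma 1: TV bound between discounted state-occupancy measures under
perturbed transition kernels. -/
theorem stmt0 {S A : Type*} [Fintype S] [DecidableEq S] [Fintype A]
    (π : S → A → ℝ) (hπ0 : ∀ s a, 0 ≤ π s a) (hπ1 : ∀ s, ∑ a, π s a = 1)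
    (To : S → A → S → ℝ) (hTo0 : ∀ s a s', 0 ≤ To s a s')
    (hTo1 : ∀ s a, ∑ s', To s a s' = 1)
    (μ : S → ℝ) (hμ0 : ∀ s, 0 ≤ μ s) (hμ1 : ∑ s, μ s = 1)
    (γ : ℝ) (hγ0 : 0 ≤ γ) (hγ1 : γ < 1) (ε' : ℝ)
    (T : S → A → S → ℝ) (hT0 : ∀ s a s', 0 ≤ T s a s')
    (hT1 : ∀ s a, ∑ s', T s a s' = 1)
    (hTV : ∀ s a, (1/2) * ∑ s', |T s a s' - To s a s'| ≤ ε') :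
    (1/2) * ∑ s, |occ π T μ γ s - occ π To μ γ s| ≤ γ * ε' / (1 - γ) := by
  have hS : Nonempty S := by
    by_contra h
    rw [not_nonempty_iff] at h
    simp [Finset.univ_eq_empty] at hμ1
  have hA : Nonempty A := by
    by_contra h
    rw [not_nonempty_iff] at h
    have := hπ1 (Classical.arbitrary S)
    simp [Finset.univ_eq_empty] at this
  have hε' : 0 ≤ ε' := by
    obtain ⟨s⟩ := hS; obtain ⟨a⟩ := hA
    refine le_trans ?_ (hTV s a)
    positivity
  set P := Pmat π T with hP
  set Po := Pmat π To with hPo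
  have hP0 : ∀ s s', 0 ≤ P s s' := fun s s' =>
    Finset.sum_nonneg fun a _ => mul_nonneg (hπ0 s a) (hT0 s a s')
  have hPo0 : ∀ s s', 0 ≤ Po s s' := fun s s' =>
    Finset.sum_nonneg fun a _ => mul_nonneg (hπ0 s a) (hTo0 s a s')
  have hP1 : ∀ s, ∑ s', P s s' = 1 := by
    intro s
    rw [show (∑ s', P s s') = ∑ s', ∑ a, π s a * T s a s' from rfl, Finset.sum_comm]
    simp_rw [← Finset.mul_sum, hT1, mul_one]
    exact hπ1 s
  have hPo1 : ∀ s, ∑ s', Po s s' = 1 := by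
    intro s
    rw [show (∑ s', Po s s') = ∑ s', ∑ a, π s a * To s a s' from rfl, Finset.sum_comm]
    simp_rw [← Finset.mul_sum, hTo1, mul_one]
    exact hπ1 s
  -- row-wise ℓ¹ bound on P - Po
  have hPdiff : ∀ s, ∑ s', |(P - Po) s s'| ≤ 2 * ε' := by
    intro s
    have h1 : ∀ s', |(P - Po) s s'| ≤ ∑ a, π s a * |T s a s' - To s a s'| := by
      intro s'
      have : (P - Po) s s' = ∑ a, π s a * (T s a s' - To s a s') := by
        simp [hP, hPo, Pmat, Matrix.sub_apply, mul_sub, Finset.sum_sub_distrib]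
      rw [this]
      refine (Finset.abs_sum_le_sum_abs _ _).trans (le_of_eq ?_)
      exact Finset.sum_congr rfl fun a _ => by rw [abs_mul, abs_of_nonneg (hπ0 s a)]
    calc ∑ s', |(P - Po) s s'| ≤ ∑ s', ∑ a, π s a * |T s a s' - To s a s'| :=
          Finset.sum_le_sum fun s' _ => h1 s'
      _ = ∑ a, π s a * ∑ s', |T s a s' - To s a s'| := by
          rw [Finset.sum_comm]; exact Finset.sum_congr rfl fun a _ => (Finset.mul_sum _ _ _).symm
      _ ≤ ∑ a, π s a * (2 * ε') := by
          refine Finset.sum_le_sum fun a _ => mul_le_mul_of_nonneg_left ?_ (hπ0 s a)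
          have := hTV s a; linarith
      _ = 2 * ε' := by rw [← Finset.sum_mul, hπ1, one_mul]
  -- the iterates
  set ν : ℕ → S → ℝ := fun t => Matrix.vecMul μ (P ^ t) with hν
  set νo : ℕ → S → ℝ := fun t => Matrix.vecMul μ (Po ^ t) with hνo
  have hstepν : ∀ t, ν (t + 1) = Matrix.vecMul (ν t) P := by
    intro t; rw [hν]; simp only
    rw [pow_succ, ← Matrix.vecMul_vecMul]
  have hstepνo : ∀ t, νo (t + 1) = Matrix.vecMul (νo t) Po := by
    intro t; rw [hνo]; simp only
    rw [pow_succ, ← Matrix.vecMul_vecMul]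
  have hvecMul_apply : ∀ (x : S → ℝ) (M : Matrix S S ℝ) s', Matrix.vecMul x M s' = ∑ s, x s * M s s' := by
    intro x M s'; simp [Matrix.vecMul, dotProduct]
  have key : ∀ (x : S → ℝ) (hx0 : ∀ s, 0 ≤ x s) (hx1 : ∑ s, x s = 1)
      (M : Matrix S S ℝ) (hM0 : ∀ s s', 0 ≤ M s s') (hM1 : ∀ s, ∑ s', M s s' = 1),
      (∀ s', 0 ≤ Matrix.vecMul x M s') ∧ (∑ s', Matrix.vecMul x M s' = 1) := by
    intro x hx0 hx1 M hM0 hM1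
    constructor
    · intro s'; rw [hvecMul_apply]
      exact Finset.sum_nonneg fun s _ => mul_nonneg (hx0 s) (hM0 s s')
    · simp_rw [hvecMul_apply]
      rw [Finset.sum_comm]
      simp_rw [← Finset.mul_sum, hM1, mul_one]
      exact hx1
  have hνprop : ∀ t, (∀ s, 0 ≤ ν t s) ∧ (∑ s, ν t s = 1) := by
    intro t
    induction t with
    | zero => simp [hν, hμ0, hμ1]
    | succ t ih =>
      rw [hstepν]
      exact key (ν t) ih.1 ih.2 P hP0 hP1
  have hνoprop : ∀ t, (∀ s, 0 ≤ νo t s) ∧ (∑ s, νo t s = 1) := by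
    intro t
    induction t with
    | zero => simp [hνo, hμ0, hμ1]
    | succ t ih =>
      rw [hstepνo]
      exact key (νo t) ih.1 ih.2 Po hPo0 hPo1
  -- main induction: ℓ¹ distance grows at most linearly
  have hind : ∀ t : ℕ, ∑ s, |ν t s - νo t s| ≤ 2 * ε' * t := by
    intro t
    induction t with
    | zero => simp [hν, hνo]
    | succ t ih =>
      have hdecomp : ∀ s', ν (t + 1) s' - νo (t + 1) s' =
          Matrix.vecMul (fun s => ν t s - νo t s) P s' + Matrix.vecMul (νo t) (P - Po) s' := by
        intro s'
        rw [hstepν, hstepνo]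
        simp only [hvecMul_apply, Matrix.sub_apply]
        rw [← Finset.sum_sub_distrib, ← Finset.sum_add_distrib]
        exact Finset.sum_congr rfl fun s _ => by ring
      calc ∑ s', |ν (t + 1) s' - νo (t + 1) s'|
          ≤ ∑ s', (|Matrix.vecMul (fun s => ν t s - νo t s) P s'| +
              |Matrix.vecMul (νo t) (P - Po) s'|) := by
            refine Finset.sum_le_sum fun s' _ => ?_
            rw [hdecomp s']; exact abs_add_le _ _
        _ = (∑ s', |Matrix.vecMul (fun s => ν t s - νo t s) P s'|) +
            ∑ s', |Matrix.vecMul (νo t) (P - Po) s'| := Finset.sum_add_distrib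
        _ ≤ (∑ s, |ν t s - νo t s|) + (∑ s, νo t s) * (2 * ε') := by
            refine add_le_add (l1_vecMul_le P hP0 hP1 _) ?_
            exact l1_vecMul_le' (P - Po) (2 * ε') hPdiff (νo t) (hνoprop t).1
        _ ≤ 2 * ε' * t + 1 * (2 * ε') := by
            rw [(hνoprop t).2]
            exact add_le_add ih le_rfl
        _ = 2 * ε' * (t + 1 : ℕ) := by push_cast; ring
  -- summability facts
  have hνbd : ∀ t s, |ν t s - νo t s| ≤ 2 := by
    intro t s
    have h1 := (hνprop t).1 s
    have h2 := (hνoprop t).1 s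
    have h3 : ν t s ≤ 1 := by
      have := Finset.single_le_sum (f := ν t) (fun s _ => (hνprop t).1 s) (Finset.mem_univ s)
      rw [(hνprop t).2] at this; exact this
    have h4 : νo t s ≤ 1 := by
      have := Finset.single_le_sum (f := νo t) (fun s _ => (hνoprop t).1 s) (Finset.mem_univ s)
      rw [(hνoprop t).2] at this; exact this
    rw [abs_le]; constructor <;> linarith
  have hsumgeo : Summable fun t : ℕ => γ ^ t := summable_geometric_of_lt_one hγ0 hγ1
  have hsum1 : ∀ s, Summable fun t : ℕ => γ ^ t * ν t s := by
    intro s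
    refine Summable.of_norm ?_
    refine Summable.of_nonneg_of_le (fun t => norm_nonneg _) (fun t => ?_) hsumgeo
    rw [Real.norm_eq_abs, abs_mul, abs_of_nonneg (pow_nonneg hγ0 t)]
    have h3 : ν t s ≤ 1 := by
      have := Finset.single_le_sum (f := ν t) (fun s _ => (hνprop t).1 s) (Finset.mem_univ s)
      rw [(hνprop t).2] at this; exact this
    have := (hνprop t).1 s
    rw [abs_of_nonneg this]
    nlinarith [pow_nonneg hγ0 t]
  have hsum2 : ∀ s, Summable fun t : ℕ => γ ^ t * νo t s := by
    intro s
    refine Summable.of_norm ?_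
    refine Summable.of_nonneg_of_le (fun t => norm_nonneg _) (fun t => ?_) hsumgeo
    rw [Real.norm_eq_abs, abs_mul, abs_of_nonneg (pow_nonneg hγ0 t)]
    have h3 : νo t s ≤ 1 := by
      have := Finset.single_le_sum (f := νo t) (fun s _ => (hνoprop t).1 s) (Finset.mem_univ s)
      rw [(hνoprop t).2] at this; exact this
    have := (hνoprop t).1 s
    rw [abs_of_nonneg this]
    nlinarith [pow_nonneg hγ0 t]
  have hsumabs : ∀ s, Summable fun t : ℕ => |γ ^ t * (ν t s - νo t s)| := by
    intro s
    refine Summable.of_nonneg_of_le (fun t => abs_nonneg _) (fun t => ?_)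
      (hsumgeo.mul_left 2)
    rw [abs_mul, abs_of_nonneg (pow_nonneg hγ0 t)]
    calc γ ^ t * |ν t s - νo t s| ≤ γ ^ t * 2 :=
          mul_le_mul_of_nonneg_left (hνbd t s) (pow_nonneg hγ0 t)
      _ = 2 * γ ^ t := by ring
  -- occ difference
  have hocc : ∀ s, occ π T μ γ s - occ π To μ γ s =
      (1 - γ) * ∑' t : ℕ, γ ^ t * (ν t s - νo t s) := by
    intro s
    rw [occ, occ, ← mul_sub, ← Summable.tsum_sub (hsum1 s) (hsum2 s)]
    congr 1
    exact tsum_congr fun t => by rw [hν, hνo]; ring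
  have h1γ : (0:ℝ) < 1 - γ := by linarith
  -- bound ∑_s |occ diff|
  have hbound : ∑ s, |occ π T μ γ s - occ π To μ γ s| ≤
      (1 - γ) * ∑' t : ℕ, γ ^ t * (2 * ε' * t) := by
    have step1 : ∀ s, |occ π T μ γ s - occ π To μ γ s| ≤
        (1 - γ) * ∑' t : ℕ, |γ ^ t * (ν t s - νo t s)| := by
      intro s
      rw [hocc s, abs_mul, abs_of_nonneg h1γ.le]
      refine mul_le_mul_of_nonneg_left ?_ h1γ.le
      have := norm_tsum_le_tsum_norm (f := fun t : ℕ => γ ^ t * (ν t s - νo t s))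
        (by simpa only [Real.norm_eq_abs] using hsumabs s)
      simpa only [Real.norm_eq_abs] using this
    calc ∑ s, |occ π T μ γ s - occ π To μ γ s|
        ≤ ∑ s, (1 - γ) * ∑' t : ℕ, |γ ^ t * (ν t s - νo t s)| :=
          Finset.sum_le_sum fun s _ => step1 s
      _ = (1 - γ) * ∑ s, ∑' t : ℕ, |γ ^ t * (ν t s - νo t s)| := by
          rw [Finset.mul_sum]
      _ = (1 - γ) * ∑' t : ℕ, ∑ s, |γ ^ t * (ν t s - νo t s)| := by
          rw [Summable.tsum_finsetSum (fun s _ => hsumabs s)]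
      _ ≤ (1 - γ) * ∑' t : ℕ, γ ^ t * (2 * ε' * t) := by
          refine mul_le_mul_of_nonneg_left ?_ h1γ.le
          refine Summable.tsum_le_tsum (fun t => ?_) ?_ ?_
          · calc ∑ s, |γ ^ t * (ν t s - νo t s)|
                = γ ^ t * ∑ s, |ν t s - νo t s| := by
                  rw [Finset.mul_sum]
                  exact Finset.sum_congr rfl fun s _ => by
                    rw [abs_mul, abs_of_nonneg (pow_nonneg hγ0 t)]
              _ ≤ γ ^ t * (2 * ε' * t) :=
                  mul_le_mul_of_nonneg_left (hind t) (pow_nonneg hγ0 t)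
          · exact summable_sum fun s _ => hsumabs s
          · have hts : Summable fun t : ℕ => (t : ℝ) ^ 1 * γ ^ t :=
              summable_pow_mul_geometric_of_norm_lt_one 1
                (by rwa [Real.norm_eq_abs, abs_of_nonneg hγ0])
            exact (hts.mul_left (2 * ε')).congr fun t => by ring
  -- evaluate the series
  have hseries : ∑' t : ℕ, γ ^ t * (2 * ε' * t) = 2 * ε' * (γ / (1 - γ) ^ 2) := by
    have h := tsum_coe_mul_geometric_of_norm_lt_one (𝕜 := ℝ) (r := γ)
      (by rwa [Real.norm_eq_abs, abs_of_nonneg hγ0])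
    calc ∑' t : ℕ, γ ^ t * (2 * ε' * t) = ∑' t : ℕ, 2 * ε' * ((t : ℝ) * γ ^ t) :=
          tsum_congr fun t => by ring
      _ = 2 * ε' * ∑' t : ℕ, (t : ℝ) * γ ^ t := tsum_mul_left
      _ = 2 * ε' * (γ / (1 - γ) ^ 2) := by rw [h]
  rw [hseries] at hbound
  have hfinal : (1 - γ) * (2 * ε' * (γ / (1 - γ) ^ 2)) = 2 * (γ * ε' / (1 - γ)) := by
    field_simp
  rw [hfinal] at hbound
  linarith
end

section
/- Let S be a finite set, let μ be a probability vector on S, and let P and P' be row-stochastic S × S matrices such that D_TV(P(s,·), P'(s,·)) ≤ ε' for every row s. Then for every natural number t, D_TV(μP^t, μP'^t) ≤ t·ε'. -/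
open Finset

private lemma prob_step {S : Type*} [Fintype S]
    (ν : S → ℝ) (hν0 : ∀ s, 0 ≤ ν s) (hν1 : ∑ s, ν s = 1)
    (P : Matrix S S ℝ) (hP0 : ∀ s s', 0 ≤ P s s') (hP1 : ∀ s, ∑ s', P s s' = 1) :
    (∀ s', 0 ≤ Matrix.vecMul ν P s') ∧ ∑ s', Matrix.vecMul ν P s' = 1 := by
  constructor
  · intro s'
    exact Finset.sum_nonneg fun s _ => mul_nonneg (hν0 s) (hP0 s s')
  · simp only [Matrix.vecMul, dotProduct]
    rw [Finset.sum_comm]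
    simp_rw [← Finset.mul_sum]
    simp [hP1, hν1]

private lemma prob_pow {S : Type*} [Fintype S] [DecidableEq S]
    (μ : S → ℝ) (hμ0 : ∀ s, 0 ≤ μ s) (hμ1 : ∑ s, μ s = 1)
    (P : Matrix S S ℝ) (hP0 : ∀ s s', 0 ≤ P s s') (hP1 : ∀ s, ∑ s', P s s' = 1)
    (t : ℕ) :
    (∀ s', 0 ≤ Matrix.vecMul μ (P ^ t) s') ∧ ∑ s', Matrix.vecMul μ (P ^ t) s' = 1 := by
  induction t with
  | zero => simp [Matrix.vecMul_one, hμ0, hμ1]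
  | succ t ih =>
    have := prob_step (Matrix.vecMul μ (P ^ t)) ih.1 ih.2 P hP0 hP1
    simpa [pow_succ, Matrix.vecMul_vecMul] using this

private lemma contract {S : Type*} [Fintype S]
    (f g : S → ℝ) (P : Matrix S S ℝ)
    (hP0 : ∀ s s', 0 ≤ P s s') (hP1 : ∀ s, ∑ s', P s s' = 1) :
    ∑ s', |Matrix.vecMul f P s' - Matrix.vecMul g P s'| ≤ ∑ s, |f s - g s| := by
  have h : ∀ s', |Matrix.vecMul f P s' - Matrix.vecMul g P s'| ≤
      ∑ s, |f s - g s| * P s s' := by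
    intro s'
    have he : Matrix.vecMul f P s' - Matrix.vecMul g P s' = ∑ s, (f s - g s) * P s s' := by
      simp [Matrix.vecMul, dotProduct, sub_mul, Finset.sum_sub_distrib]
    rw [he]
    calc |∑ s, (f s - g s) * P s s'| ≤ ∑ s, |(f s - g s) * P s s'| :=
          Finset.abs_sum_le_sum_abs _ _
      _ = ∑ s, |f s - g s| * P s s' := by
          refine Finset.sum_congr rfl fun s _ => ?_
          rw [abs_mul, abs_of_nonneg (hP0 s s')]
  calc ∑ s', |Matrix.vecMul f P s' - Matrix.vecMul g P s'|
      ≤ ∑ s', ∑ s, |f s - g s| * P s s' := Finset.sum_le_sum fun s' _ => h s'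
    _ = ∑ s, |f s - g s| := by
        rw [Finset.sum_comm]; simp_rw [← Finset.mul_sum]; simp [hP1]

private lemma row_close {S : Type*} [Fintype S]
    (ν : S → ℝ) (hν0 : ∀ s, 0 ≤ ν s) (hν1 : ∑ s, ν s = 1)
    (P P' : Matrix S S ℝ) (ε' : ℝ)
    (hTV : ∀ s, (1/2) * ∑ s', |P s s' - P' s s'| ≤ ε') :
    ∑ s', |Matrix.vecMul ν P s' - Matrix.vecMul ν P' s'| ≤ 2 * ε' := by
  have h : ∀ s', |Matrix.vecMul ν P s' - Matrix.vecMul ν P' s'| ≤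
      ∑ s, ν s * |P s s' - P' s s'| := by
    intro s'
    have he : Matrix.vecMul ν P s' - Matrix.vecMul ν P' s' =
        ∑ s, ν s * (P s s' - P' s s') := by
      simp [Matrix.vecMul, dotProduct, mul_sub, Finset.sum_sub_distrib]
    rw [he]
    calc |∑ s, ν s * (P s s' - P' s s')| ≤ ∑ s, |ν s * (P s s' - P' s s')| :=
          Finset.abs_sum_le_sum_abs _ _
      _ = ∑ s, ν s * |P s s' - P' s s'| := by
          refine Finset.sum_congr rfl fun s _ => ?_
          rw [abs_mul, abs_of_nonneg (hν0 s)]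
  calc ∑ s', |Matrix.vecMul ν P s' - Matrix.vecMul ν P' s'|
      ≤ ∑ s', ∑ s, ν s * |P s s' - P' s s'| := Finset.sum_le_sum fun s' _ => h s'
    _ = ∑ s, ν s * ∑ s', |P s s' - P' s s'| := by
        rw [Finset.sum_comm]; simp_rw [← Finset.mul_sum]
    _ ≤ ∑ s, ν s * (2 * ε') := by
        refine Finset.sum_le_sum fun s _ => ?_
        exact mul_le_mul_of_nonneg_left (by linarith [hTV s]) (hν0 s)
    _ = 2 * ε' := by rw [← Finset.sum_mul, hν1, one_mul]

/-- Iterated TV bound: `D_TV(μ Pᵗ, μ P'ᵗ) ≤ t ε'` for row-stochastic matrices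
whose rows are `ε'`-close in TV. -/
theorem stmt2 {S : Type*} [Fintype S] [DecidableEq S]
    (μ : S → ℝ) (hμ0 : ∀ s, 0 ≤ μ s) (hμ1 : ∑ s, μ s = 1)
    (P P' : Matrix S S ℝ)
    (hP0 : ∀ s s', 0 ≤ P s s') (hP1 : ∀ s, ∑ s', P s s' = 1)
    (hP'0 : ∀ s s', 0 ≤ P' s s') (hP'1 : ∀ s, ∑ s', P' s s' = 1)
    (ε' : ℝ) (hTV : ∀ s, (1/2) * ∑ s', |P s s' - P' s s'| ≤ ε') :
    ∀ t : ℕ,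
      (1/2) * ∑ s', |Matrix.vecMul μ (P ^ t) s' - Matrix.vecMul μ (P' ^ t) s'| ≤
        (t : ℝ) * ε' := by
  intro t
  induction t with
  | zero => simp
  | succ t ih =>
    set f := Matrix.vecMul μ (P ^ t)
    set g := Matrix.vecMul μ (P' ^ t)
    have hg := prob_pow μ hμ0 hμ1 P' hP'0 hP'1 t
    have h1 : ∑ s', |Matrix.vecMul f P s' - Matrix.vecMul g P s'| ≤ 2 * ((t : ℝ) * ε') := by
      have := contract f g P hP0 hP1
      linarith [ih]
    have h2 : ∑ s', |Matrix.vecMul g P s' - Matrix.vecMul g P' s'| ≤ 2 * ε' :=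
      row_close g hg.1 hg.2 P P' ε' hTV
    have htri : ∑ s', |Matrix.vecMul f P s' - Matrix.vecMul g P' s'| ≤
        ∑ s', |Matrix.vecMul f P s' - Matrix.vecMul g P s'| +
        ∑ s', |Matrix.vecMul g P s' - Matrix.vecMul g P' s'| := by
      rw [← Finset.sum_add_distrib]
      exact Finset.sum_le_sum fun s' _ => abs_sub_le _ _ _
    have hrw : ∀ s', Matrix.vecMul μ (P ^ (t+1)) s' = Matrix.vecMul f P s' := by
      intro s'; rw [pow_succ, ← Matrix.vecMul_vecMul]
    have hrw' : ∀ s', Matrix.vecMul μ (P' ^ (t+1)) s' = Matrix.vecMul g P' s' := by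
      intro s'; rw [pow_succ, ← Matrix.vecMul_vecMul]
    simp only [hrw, hrw']
    push_cast
    linarith
end

section
/- Let S and A be finite sets, let π be a policy, let T^o be a transition kernel, let μ be an initial distribution on S, and let γ ∈ [0,1). For every transition kernel T satisfying D_TV(T(·|s,a), T^o(·|s,a)) ≤ ε' for all (s,a) ∈ S × A, the discounted state–action occupancy measures ρ^π_T(s,a) := π(a|s)·ρ^π_T(s) and ρ^π_{T^o}(s,a) := π(a|s)·ρ^π_{T^o}(s) satisfy D_TV(ρ^π_T(·,·), ρ^π_{T^o}(·,·)) ≤ γ·ε'/(1 − γ). -/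
/-!
Averaging the kernels over `π` gives policy matrices `P`, `P°` whose rows are `2ε'`-close in `ℓ¹`.
From `μPᵗ⁺¹ - μP°ᵗ⁺¹ = (μPᵗ - μP°ᵗ)P + (μP°ᵗ)(P - P°)` and the `ℓ¹`-contractivity of stochastic
matrices, `‖μPᵗ - μP°ᵗ‖₁ ≤ 2ε't`; weighting by `(1 - γ)γᵗ` and using `∑ₜ tγᵗ = γ / (1 - γ)²`
gives `‖ρ_T - ρ_{T°}‖₁ ≤ 2ε'γ / (1 - γ)`. Since each `π(·|s)` is a probability vector, the
state–action distance equals the state distance.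
-/

open Finset

open Matrix

section StochasticL1

variable {S : Type*} [Fintype S]

lemma sum_abs_of_mem_stdSimplex {u : S → ℝ} (hu : u ∈ stdSimplex ℝ S) : ∑ s, |u s| = 1 := by
  simpa only [abs_of_nonneg (hu.1 _)] using hu.2

lemma abs_le_one_of_mem_stdSimplex {u : S → ℝ} (hu : u ∈ stdSimplex ℝ S) (s : S) : |u s| ≤ 1 :=
  sum_abs_of_mem_stdSimplex hu ▸ single_le_sum (fun i _ => abs_nonneg (u i)) (mem_univ s)

lemma sum_abs_vecMul_le (u : S → ℝ) {M : Matrix S S ℝ} {c : ℝ}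
    (hM : ∀ s, ∑ s', |M s s'| ≤ c) : ∑ s', |(u ᵥ* M) s'| ≤ c * ∑ s, |u s| :=
  calc ∑ s', |(u ᵥ* M) s'| ≤ ∑ s', ∑ s, |u s| * |M s s'| :=
        sum_le_sum fun s' _ => (abs_sum_le_sum_abs _ _).trans_eq (by simp only [abs_mul])
    _ = ∑ s, |u s| * ∑ s', |M s s'| := by rw [sum_comm]; simp only [mul_sum]
    _ ≤ ∑ s, |u s| * c := sum_le_sum fun s _ => mul_le_mul_of_nonneg_left (hM s) (abs_nonneg _)
    _ = c * ∑ s, |u s| := by rw [← sum_mul, mul_comm]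

variable [DecidableEq S]

lemma sum_abs_row_of_mem_rowStochastic {M : Matrix S S ℝ} (hM : M ∈ rowStochastic ℝ S) (s : S) :
    ∑ s', |M s s'| = 1 := by
  simpa only [abs_of_nonneg (nonneg_of_mem_rowStochastic hM)]
    using sum_row_of_mem_rowStochastic hM s

lemma vecMul_mem_stdSimplex {u : S → ℝ} {M : Matrix S S ℝ} (hu : u ∈ stdSimplex ℝ S)
    (hM : M ∈ rowStochastic ℝ S) : u ᵥ* M ∈ stdSimplex ℝ S := by
  refine ⟨nonneg_vecMul_of_mem_rowStochastic hM hu.1, ?_⟩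
  simpa [dotProduct] using
    vecMul_dotProduct_one_eq_one_rowStochastic hM (x := u) (by simpa [dotProduct] using hu.2)

lemma sum_abs_vecMul_pow_sub_le {P Q : Matrix S S ℝ} (hP : P ∈ rowStochastic ℝ S)
    (hQ : Q ∈ rowStochastic ℝ S) {δ : ℝ} (hPQ : ∀ s, ∑ s', |P s s' - Q s s'| ≤ δ)
    {u : S → ℝ} (hu : u ∈ stdSimplex ℝ S) (t : ℕ) :
    ∑ s, |(u ᵥ* P ^ t) s - (u ᵥ* Q ^ t) s| ≤ δ * t := by
  induction t with
  | zero => simp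
  | succ t ih =>
    have hQt : u ᵥ* Q ^ t ∈ stdSimplex ℝ S := vecMul_mem_stdSimplex hu (pow_mem hQ t)
    have hsplit : u ᵥ* P ^ (t + 1) - u ᵥ* Q ^ (t + 1)
        = (u ᵥ* P ^ t - u ᵥ* Q ^ t) ᵥ* P + (u ᵥ* Q ^ t) ᵥ* (P - Q) := by
      rw [pow_succ, pow_succ, ← vecMul_vecMul, ← vecMul_vecMul, sub_vecMul, vecMul_sub]
      abel
    have hdrift : ∑ s, |((u ᵥ* P ^ t - u ᵥ* Q ^ t) ᵥ* P) s| ≤ δ * t := by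
      refine (sum_abs_vecMul_le _ fun s => (sum_abs_row_of_mem_rowStochastic hP s).le).trans ?_
      simpa only [one_mul, Pi.sub_apply] using ih
    have hstep : ∑ s, |((u ᵥ* Q ^ t) ᵥ* (P - Q)) s| ≤ δ := by
      have h := sum_abs_vecMul_le (u ᵥ* Q ^ t) (M := P - Q) fun s => by
        simpa only [Matrix.sub_apply] using hPQ s
      rwa [sum_abs_of_mem_stdSimplex hQt, mul_one] at h
    calc ∑ s, |(u ᵥ* P ^ (t + 1)) s - (u ᵥ* Q ^ (t + 1)) s|
        ≤ ∑ s, (|((u ᵥ* P ^ t - u ᵥ* Q ^ t) ᵥ* P) s| + |((u ᵥ* Q ^ t) ᵥ* (P - Q)) s|) :=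
          sum_le_sum fun s _ => by
            rw [← Pi.sub_apply (u ᵥ* _), hsplit]; exact abs_add_le _ _
      _ ≤ δ * t + δ := by rw [sum_add_distrib]; exact add_le_add hdrift hstep
      _ = δ * (t + 1 : ℕ) := by push_cast; ring

end StochasticL1

section Discounted

variable {S : Type*} [Fintype S] {γ : ℝ}

lemma summable_geometric_mul_of_mem_stdSimplex (hγ0 : 0 ≤ γ) (hγ1 : γ < 1)
    {v : ℕ → S → ℝ} (hv : ∀ t, v t ∈ stdSimplex ℝ S) (s : S) :
    Summable fun t => γ ^ t * v t s :=
  (summable_geometric_of_lt_one hγ0 hγ1).of_norm_bounded fun t => by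
    rw [Real.norm_eq_abs, abs_mul, abs_of_nonneg (pow_nonneg hγ0 t)]
    exact mul_le_of_le_one_right (pow_nonneg hγ0 t) (abs_le_one_of_mem_stdSimplex (hv t) s)

lemma sum_abs_tsum_geometric_mul_le (hγ0 : 0 ≤ γ) (hγ1 : γ < 1) {x : ℕ → S → ℝ} {c : ℝ}
    (hx : ∀ t, ∑ s, |x t s| ≤ c * t) :
    ∑ s, |∑' t, γ ^ t * x t s| ≤ c * (γ / (1 - γ) ^ 2) := by
  have hγ : ‖γ‖ < 1 := by rwa [Real.norm_eq_abs, abs_of_nonneg hγ0]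
  have hbound : ∀ t, ∑ s, |γ ^ t * x t s| ≤ c * (t * γ ^ t) := fun t => by
    simp only [abs_mul, abs_of_nonneg (pow_nonneg hγ0 t), ← mul_sum]
    exact (mul_le_mul_of_nonneg_left (hx t) (pow_nonneg hγ0 t)).trans_eq (by ring)
  have hlin : Summable fun t : ℕ => c * (t * γ ^ t) :=
    ((summable_pow_mul_geometric_of_norm_lt_one 1 hγ).mul_left c).congr fun t => by simp
  have habs : ∀ s, Summable fun t => |γ ^ t * x t s| := fun s =>
    hlin.of_nonneg_of_le (fun t => abs_nonneg _) fun t =>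
      (single_le_sum (fun s' _ => abs_nonneg (γ ^ t * x t s')) (mem_univ s)).trans (hbound t)
  calc ∑ s, |∑' t, γ ^ t * x t s| ≤ ∑ s, ∑' t, |γ ^ t * x t s| :=
        sum_le_sum fun s _ => by
          simpa only [Real.norm_eq_abs] using
            norm_tsum_le_tsum_norm (f := fun t => γ ^ t * x t s) (habs s)
    _ = ∑' t, ∑ s, |γ ^ t * x t s| := (Summable.tsum_finsetSum fun s _ => habs s).symm
    _ ≤ ∑' t : ℕ, c * (t * γ ^ t) :=
        (summable_sum fun s _ => habs s).tsum_le_tsum hbound hlin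
    _ = c * (γ / (1 - γ) ^ 2) := by rw [tsum_mul_left, tsum_coe_mul_geometric_of_norm_lt_one hγ]

end Discounted

section MDP

variable {S A : Type*} [Fintype S] [Fintype A] {π : S → A → ℝ}

lemma Pmat_mem_rowStochastic [DecidableEq S] {T : S → A → S → ℝ} (hπ0 : ∀ s a, 0 ≤ π s a)
    (hπ1 : ∀ s, ∑ a, π s a = 1) (hT0 : ∀ s a s', 0 ≤ T s a s')
    (hT1 : ∀ s a, ∑ s', T s a s' = 1) : Pmat π T ∈ rowStochastic ℝ S := by
  refine mem_rowStochastic_iff_sum.2 ⟨fun s s' => sum_nonneg fun a _ =>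
    mul_nonneg (hπ0 s a) (hT0 s a s'), fun s => ?_⟩
  simp only [Pmat, of_apply]
  rw [sum_comm]
  simp only [← mul_sum, hT1, mul_one, hπ1]

lemma sum_abs_Pmat_sub_le {T To : S → A → S → ℝ} {δ : ℝ} (hπ0 : ∀ s a, 0 ≤ π s a)
    (hπ1 : ∀ s, ∑ a, π s a = 1) (hTTo : ∀ s a, ∑ s', |T s a s' - To s a s'| ≤ δ) (s : S) :
    ∑ s', |Pmat π T s s' - Pmat π To s s'| ≤ δ :=
  calc ∑ s', |Pmat π T s s' - Pmat π To s s'|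
      ≤ ∑ s', ∑ a, π s a * |T s a s' - To s a s'| := sum_le_sum fun s' _ => by
        simp only [Pmat, of_apply, ← sum_sub_distrib, ← mul_sub]
        refine (abs_sum_le_sum_abs _ _).trans_eq (sum_congr rfl fun a _ => ?_)
        rw [abs_mul, abs_of_nonneg (hπ0 s a)]
    _ = ∑ a, π s a * ∑ s', |T s a s' - To s a s'| := by rw [sum_comm]; simp only [mul_sum]
    _ ≤ ∑ a, π s a * δ := sum_le_sum fun a _ => mul_le_mul_of_nonneg_left (hTTo s a) (hπ0 s a)
    _ = δ := by rw [← sum_mul, hπ1, one_mul]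

lemma sum_abs_policy_mul_sub (hπ0 : ∀ s a, 0 ≤ π s a) (hπ1 : ∀ s, ∑ a, π s a = 1)
    (f g : S → ℝ) :
    ∑ p : S × A, |π p.1 p.2 * f p.1 - π p.1 p.2 * g p.1| = ∑ s, |f s - g s| := by
  rw [Fintype.sum_prod_type]
  refine sum_congr rfl fun s _ => ?_
  simp only [← mul_sub, abs_mul, abs_of_nonneg (hπ0 s _), ← sum_mul, hπ1, one_mul]

lemma occ_sub_occ [DecidableEq S] {T To : S → A → S → ℝ} {μ : S → ℝ} {γ : ℝ}
    (hP : Pmat π T ∈ rowStochastic ℝ S) (hPo : Pmat π To ∈ rowStochastic ℝ S)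
    (hμ : μ ∈ stdSimplex ℝ S) (hγ0 : 0 ≤ γ) (hγ1 : γ < 1) (s : S) :
    occ π T μ γ s - occ π To μ γ s
      = (1 - γ) * ∑' t, γ ^ t * ((μ ᵥ* Pmat π T ^ t) s - (μ ᵥ* Pmat π To ^ t) s) := by
  have hsum {P : Matrix S S ℝ} (hP : P ∈ rowStochastic ℝ S) :=
    summable_geometric_mul_of_mem_stdSimplex hγ0 hγ1
      (fun t => vecMul_mem_stdSimplex hμ (pow_mem hP t)) s
  rw [occ, occ, ← mul_sub, ← (hsum hP).tsum_sub (hsum hPo)]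
  simp only [mul_sub]

end MDP

/-- TV bound between discounted state–action occupancy measures
`ρ^π_T(s,a) = π(a|s) ρ^π_T(s)` under perturbed transition kernels. -/
theorem stmt4 {S A : Type*} [Fintype S] [DecidableEq S] [Fintype A]
    (π : S → A → ℝ) (hπ0 : ∀ s a, 0 ≤ π s a) (hπ1 : ∀ s, ∑ a, π s a = 1)
    (To : S → A → S → ℝ) (hTo0 : ∀ s a s', 0 ≤ To s a s')
    (hTo1 : ∀ s a, ∑ s', To s a s' = 1)
    (μ : S → ℝ) (hμ0 : ∀ s, 0 ≤ μ s) (hμ1 : ∑ s, μ s = 1)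
    (γ : ℝ) (hγ0 : 0 ≤ γ) (hγ1 : γ < 1) (ε' : ℝ)
    (T : S → A → S → ℝ) (hT0 : ∀ s a s', 0 ≤ T s a s')
    (hT1 : ∀ s a, ∑ s', T s a s' = 1)
    (hTV : ∀ s a, (1/2) * ∑ s', |T s a s' - To s a s'| ≤ ε') :
    (1/2) * ∑ p : S × A,
        |π p.1 p.2 * occ π T μ γ p.1 - π p.1 p.2 * occ π To μ γ p.1| ≤
      γ * ε' / (1 - γ) := by
  have hμ : μ ∈ stdSimplex ℝ S := ⟨hμ0, hμ1⟩
  have hP := Pmat_mem_rowStochastic hπ0 hπ1 hT0 hT1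
  have hPo := Pmat_mem_rowStochastic hπ0 hπ1 hTo0 hTo1
  have hdrift := sum_abs_vecMul_pow_sub_le hP hPo
    (sum_abs_Pmat_sub_le (δ := 2 * ε') hπ0 hπ1 fun s a => by linarith [hTV s a]) hμ
  have hγ : 0 < 1 - γ := sub_pos.2 hγ1
  calc (1/2) * ∑ p : S × A, |π p.1 p.2 * occ π T μ γ p.1 - π p.1 p.2 * occ π To μ γ p.1|
      = (1/2) * (1 - γ) * ∑ s, |∑' t, γ ^ t *
          ((μ ᵥ* Pmat π T ^ t) s - (μ ᵥ* Pmat π To ^ t) s)| := by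
        simp only [sum_abs_policy_mul_sub hπ0 hπ1, occ_sub_occ hP hPo hμ hγ0 hγ1, abs_mul,
          abs_of_pos hγ, ← mul_sum, mul_assoc]
    _ ≤ (1/2) * (1 - γ) * (2 * ε' * (γ / (1 - γ) ^ 2)) := by
        gcongr
        exact sum_abs_tsum_geometric_mul_le hγ0 hγ1 hdrift
    _ = γ * ε' / (1 - γ) := by field_simp
end

section
/- Let X be a finite type, P_o a probability mass function on X with nonempty support, ℓ : X → ℝ a loss, ε ≥ 0, and M := max{ℓ(x) : P_o(x) > 0}. Then for every probability mass function Q on X whose support is contained in the support of P_o and which satisfies D_TV(Q, P_o) ≤ ε, and for every λ ∈ ℝ: Σ_x Q(x)·ℓ(x) ≤ Σ_x P_o(x)·(ℓ(x) − λ)_+ + ε·(M − λ)_+ + λ, where (u)_+ := max(u, 0). -/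
open Finset

/-- Weak duality for the TV-robust linear maximization: any feasible `Q`
is bounded by the dual objective at any `λ`. -/
theorem stmt7 {X : Type*} [Fintype X]
    (Po : X → ℝ) (hPo0 : ∀ x, 0 ≤ Po x) (hPo1 : ∑ x, Po x = 1)
    (hne : (Finset.univ.filter fun x => 0 < Po x).Nonempty)
    (ℓ : X → ℝ) (ε : ℝ) (hε : 0 ≤ ε)
    (M : ℝ) (hM : M = (Finset.univ.filter fun x => 0 < Po x).sup' hne ℓ)
    (Q : X → ℝ) (hQ0 : ∀ x, 0 ≤ Q x) (hQ1 : ∑ x, Q x = 1)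
    (hQsupp : ∀ x, 0 < Q x → 0 < Po x)
    (hQTV : (1/2) * ∑ x, |Q x - Po x| ≤ ε)
    (lam : ℝ) :
    ∑ x, Q x * ℓ x ≤
      (∑ x, Po x * max (ℓ x - lam) 0) + ε * max (M - lam) 0 + lam := by
  have hQPo0 : ∀ x, Po x = 0 → Q x = 0 := by
    intro x hx
    by_contra h
    have h1 : 0 < Q x := lt_of_le_of_ne (hQ0 x) (Ne.symm h)
    have := hQsupp x h1
    linarith
  have hle : ∀ x, 0 < Po x → ℓ x ≤ M := by
    intro x hx
    rw [hM]
    exact Finset.le_sup' ℓ (by simp [hx])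
  have key : ∀ x, Q x * ℓ x ≤
      Po x * max (ℓ x - lam) 0 + max (Q x - Po x) 0 * max (M - lam) 0 + Q x * lam := by
    intro x
    rcases eq_or_lt_of_le (hPo0 x) with h | h
    · have hq := hQPo0 x h.symm
      simp [hq, ← h]
    · have hm := hle x h
      have hℓ : ℓ x ≤ max (ℓ x - lam) 0 + lam := by
        have := le_max_left (ℓ x - lam) 0
        linarith
      have h1 : Q x * ℓ x ≤ Q x * (max (ℓ x - lam) 0 + lam) :=
        mul_le_mul_of_nonneg_left hℓ (hQ0 x)
      have h2 : Q x * max (ℓ x - lam) 0 ≤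
          Po x * max (ℓ x - lam) 0 + max (Q x - Po x) 0 * max (M - lam) 0 := by
        have hmax : max (ℓ x - lam) 0 ≤ max (M - lam) 0 := max_le_max (by linarith) le_rfl
        have hnn : (0:ℝ) ≤ max (ℓ x - lam) 0 := le_max_right _ _
        rcases le_total (Q x - Po x) 0 with h' | h'
        · rw [max_eq_right h']
          nlinarith
        · rw [max_eq_left h']
          nlinarith
      have hexp : Q x * (max (ℓ x - lam) 0 + lam) = Q x * max (ℓ x - lam) 0 + Q x * lam :=
        mul_add _ _ _
      linarith
  have hsumid : ∑ x, max (Q x - Po x) 0 = (1/2) * ∑ x, |Q x - Po x| := by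
    have hsum0 : ∑ x, (Q x - Po x) = 0 := by
      rw [Finset.sum_sub_distrib, hQ1, hPo1]; ring
    have heach : ∀ x : X, max (Q x - Po x) 0 = ((Q x - Po x) + |Q x - Po x|) / 2 := by
      intro x
      rcases le_total (Q x - Po x) 0 with h' | h'
      · rw [max_eq_right h', abs_of_nonpos h']; ring
      · rw [max_eq_left h', abs_of_nonneg h']; ring
    rw [Finset.sum_congr rfl (fun x _ => heach x)]
    rw [← Finset.sum_div, Finset.sum_add_distrib, hsum0]
    ring
  calc ∑ x, Q x * ℓ x
      ≤ ∑ x, (Po x * max (ℓ x - lam) 0 + max (Q x - Po x) 0 * max (M - lam) 0 + Q x * lam) :=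
        Finset.sum_le_sum (fun x _ => key x)
    _ = (∑ x, Po x * max (ℓ x - lam) 0) + (∑ x, max (Q x - Po x) 0) * max (M - lam) 0 + lam := by
        rw [Finset.sum_add_distrib, Finset.sum_add_distrib, ← Finset.sum_mul, ← Finset.sum_mul,
          hQ1]
        ring
    _ ≤ _ := by
        have hMnn : (0:ℝ) ≤ max (M - lam) 0 := le_max_right _ _
        have : (∑ x, max (Q x - Po x) 0) ≤ ε := by rw [hsumid]; exact hQTV
        nlinarith
end

section
/- Let X be a finite type, P_o a probability mass function on X with nonempty support, ℓ : X → ℝ a loss, ε ≥ 0, and M := max{ℓ(x) : P_o(x) > 0}. Then the supremum, over all probability mass functions Q on X whose support is contained in the support of P_o and which satisfy D_TV(Q, P_o) ≤ ε, of Σ_x Q(x)·ℓ(x), equals the infimum over λ ∈ ℝ of g(λ) := Σ_x P_o(x)·(ℓ(x) − λ)_+ + ε·(M − λ)_+ + λ, where (u)_+ := max(u, 0); moreover this infimum is attained. -/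
open Finset

lemma wd8 {X : Type*} [Fintype X]
    (Po Q ℓ : X → ℝ) (ε M lam : ℝ)
    (hPo0 : ∀ x, 0 ≤ Po x) (hPo1 : ∑ x, Po x = 1)
    (hQ0 : ∀ x, 0 ≤ Q x) (hQ1 : ∑ x, Q x = 1)
    (hsupp : ∀ x, 0 < Q x → 0 < Po x)
    (hTV : (1/2) * ∑ x, |Q x - Po x| ≤ ε)
    (hℓM : ∀ x, 0 < Po x → ℓ x ≤ M) :
    ∑ x, Q x * ℓ x ≤ (∑ x, Po x * max (ℓ x - lam) 0) + ε * max (M - lam) 0 + lam := by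
  have h1 : ∑ x, Q x * ℓ x = (∑ x, Q x * (ℓ x - lam)) + lam := by
    have : ∑ x, Q x * ℓ x = ∑ x, (Q x * (ℓ x - lam) + Q x * lam) := by
      apply Finset.sum_congr rfl; intro x _; ring
    rw [this, Finset.sum_add_distrib, ← Finset.sum_mul, hQ1, one_mul]
  have h2 : (∑ x, Q x * (ℓ x - lam)) ≤ ∑ x, Q x * max (ℓ x - lam) 0 := by
    apply Finset.sum_le_sum; intro x _
    exact mul_le_mul_of_nonneg_left (le_max_left _ _) (hQ0 x)
  have h3 : ∑ x, Q x * max (ℓ x - lam) 0 =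
      (∑ x, Po x * max (ℓ x - lam) 0) + ∑ x, (Q x - Po x) * max (ℓ x - lam) 0 := by
    rw [← Finset.sum_add_distrib]; apply Finset.sum_congr rfl; intro x _; ring
  have h4 : ∑ x, (Q x - Po x) * max (ℓ x - lam) 0 ≤
      ∑ x, max (Q x - Po x) 0 * max (M - lam) 0 := by
    apply Finset.sum_le_sum; intro x _
    rcases le_or_gt (Q x - Po x) 0 with h | h
    · have h' : (Q x - Po x) * max (ℓ x - lam) 0 ≤ 0 :=
        mul_nonpos_of_nonpos_of_nonneg h (le_max_right _ _)
      exact h'.trans (mul_nonneg (le_max_right _ _) (le_max_right _ _))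
    · have hQx : 0 < Q x := lt_of_le_of_lt (hPo0 x) (by linarith)
      have hlM : ℓ x ≤ M := hℓM x (hsupp x hQx)
      have : max (ℓ x - lam) 0 ≤ max (M - lam) 0 :=
        max_le_max (by linarith) le_rfl
      calc (Q x - Po x) * max (ℓ x - lam) 0
          ≤ (Q x - Po x) * max (M - lam) 0 :=
            mul_le_mul_of_nonneg_left this h.le
        _ = max (Q x - Po x) 0 * max (M - lam) 0 := by rw [max_eq_left h.le]
  have h5 : ∑ x, max (Q x - Po x) 0 ≤ ε := by
    have e1 : ∑ x, max (Q x - Po x) 0 = (1/2) * ((∑ x, (Q x - Po x)) + ∑ x, |Q x - Po x|) := by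
      rw [← Finset.sum_add_distrib, Finset.mul_sum]
      apply Finset.sum_congr rfl; intro x _
      rcases le_or_gt 0 (Q x - Po x) with h | h
      · rw [max_eq_left h, abs_of_nonneg h]; ring
      · rw [max_eq_right h.le, abs_of_neg h]; ring
    have e2 : ∑ x, (Q x - Po x) = 0 := by
      rw [Finset.sum_sub_distrib, hQ1, hPo1]; ring
    rw [e1, e2] at *
    calc (1/2 : ℝ) * (0 + ∑ x, |Q x - Po x|) = (1/2) * ∑ x, |Q x - Po x| := by ring
      _ ≤ ε := hTV
  have h6 : ∑ x, max (Q x - Po x) 0 * max (M - lam) 0 ≤ ε * max (M - lam) 0 := by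
    rw [← Finset.sum_mul]
    exact mul_le_mul_of_nonneg_right h5 (le_max_right _ _)
  linarith

lemma constr8 {X : Type*} [Fintype X]
    (Po : X → ℝ) (hPo0 : ∀ x, 0 ≤ Po x) (hPo1 : ∑ x, Po x = 1)
    (hne : (Finset.univ.filter fun x => 0 < Po x).Nonempty)
    (ℓ : X → ℝ) (ε : ℝ) (hε : 0 ≤ ε)
    (M : ℝ) (hM : M = (Finset.univ.filter fun x => 0 < Po x).sup' hne ℓ) :
    ∃ (lam : ℝ) (Q : X → ℝ), (∀ x, 0 ≤ Q x) ∧ (∑ x, Q x = 1) ∧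
      (∀ x, 0 < Q x → 0 < Po x) ∧ ((1/2) * ∑ x, |Q x - Po x| ≤ ε) ∧
      ∑ x, Q x * ℓ x
        = (∑ x, Po x * max (ℓ x - lam) 0) + ε * max (M - lam) 0 + lam := by
  classical
  obtain ⟨xs, hxsS, hxs⟩ := Finset.exists_mem_eq_sup' hne ℓ
  have hPoxs : 0 < Po xs := (Finset.mem_filter.mp hxsS).2
  have hMxs : M = ℓ xs := hM.trans hxs
  have hℓM : ∀ x, 0 < Po x → ℓ x ≤ M := by
    intro x hx
    rw [hM]
    exact Finset.le_sup' ℓ (Finset.mem_filter.mpr ⟨Finset.mem_univ _, hx⟩)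
  have hPoz : ∀ x, ¬ 0 < Po x → Po x = 0 := fun x h => le_antisymm (not_lt.mp h) (hPo0 x)
  rcases lt_or_ge 1 ε with hε1 | hε1
  · -- ε > 1 : Q = point mass at xs, lam = M
    refine ⟨M, fun x => if x = xs then 1 else 0, ?_, ?_, ?_, ?_, ?_⟩
    · intro x; dsimp only; split <;> norm_num
    · simp
    · intro x hx
      by_cases h : x = xs
      · subst h; exact hPoxs
      · simp [h] at hx
    · have hb : ∀ x, |(if x = xs then (1:ℝ) else 0) - Po x| ≤ (if x = xs then (1:ℝ) else 0) + Po x := by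
        intro x
        have h1 : (0:ℝ) ≤ if x = xs then (1:ℝ) else 0 := by split <;> norm_num
        rw [abs_le]; constructor <;> nlinarith [hPo0 x]
      have : ∑ x, |(if x = xs then (1:ℝ) else 0) - Po x| ≤ ∑ x, ((if x = xs then (1:ℝ) else 0) + Po x) :=
        Finset.sum_le_sum (fun x _ => hb x)
      rw [Finset.sum_add_distrib, hPo1] at this
      simp only [Finset.sum_ite_eq', Finset.mem_univ, if_pos] at this
      linarith
    · have hz : ∑ x, Po x * max (ℓ x - M) 0 = 0 := by
        apply Finset.sum_eq_zero
        intro x _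
        rcases lt_or_ge 0 (Po x) with h | h
        · rw [max_eq_right (by linarith [hℓM x h])]; ring
        · rw [hPoz x (not_lt.mpr h)]; ring
      rw [hz]
      simp [hMxs]
  · -- ε ≤ 1 : quantile construction
    set S := Finset.univ.filter (fun x => 0 < Po x) with hS
    set T := (S.image ℓ).filter
        (fun t => ε ≤ ∑ x ∈ Finset.univ.filter (fun x => ℓ x ≤ t), Po x) with hT
    have hMT : M ∈ T := by
      have h1 : M ∈ S.image ℓ := by
        rw [hMxs]; exact Finset.mem_image_of_mem ℓ hxsS
      have h2 : ∑ x ∈ Finset.univ.filter (fun x => ℓ x ≤ M), Po x = 1 := by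
        rw [← hPo1]
        apply Finset.sum_subset (Finset.filter_subset _ _)
        intro x _ hx
        simp only [Finset.mem_filter, Finset.mem_univ, true_and] at hx
        exact hPoz x (fun h => hx (hℓM x h))
      exact Finset.mem_filter.mpr ⟨h1, by rw [h2]; exact hε1⟩
    have hTne : T.Nonempty := ⟨M, hMT⟩
    set lam := T.min' hTne with hlam
    have hlamT : lam ∈ T := T.min'_mem hTne
    obtain ⟨hlam_im, hquant⟩ := Finset.mem_filter.mp hlamT
    obtain ⟨x₀, hx₀S, hx₀⟩ := Finset.mem_image.mp hlam_im
    have hPox₀ : 0 < Po x₀ := (Finset.mem_filter.mp hx₀S).2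
    have hlamM : lam ≤ M := by
      rw [hM]; exact hx₀ ▸ Finset.le_sup' ℓ hx₀S
    set a := ∑ x ∈ Finset.univ.filter (fun x => ℓ x < lam), Po x with ha_def
    set b := ∑ x ∈ Finset.univ.filter (fun x => ℓ x = lam), Po x with hb_def
    set c := ∑ x ∈ Finset.univ.filter (fun x => lam < ℓ x), Po x with hc_def
    -- set equalities
    have hset1 : (Finset.univ.filter (fun x => ℓ x ≤ lam)).filter (fun x => ℓ x < lam)
        = Finset.univ.filter (fun x => ℓ x < lam) := by
      ext x; simp only [Finset.mem_filter, Finset.mem_univ, true_and]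
      exact ⟨fun h => h.2, fun h => ⟨h.le, h⟩⟩
    have hset2 : (Finset.univ.filter (fun x => ℓ x ≤ lam)).filter (fun x => ¬ ℓ x < lam)
        = Finset.univ.filter (fun x => ℓ x = lam) := by
      ext x; simp only [Finset.mem_filter, Finset.mem_univ, true_and, not_lt]
      exact ⟨fun h => le_antisymm h.1 h.2, fun h => ⟨h.le, h.ge⟩⟩
    have hset3 : Finset.univ.filter (fun x => ¬ ℓ x ≤ lam)
        = Finset.univ.filter (fun x => lam < ℓ x) := by
      ext x; simp only [Finset.mem_filter, Finset.mem_univ, true_and, not_le]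
    have hsplitle : ∀ f : X → ℝ, ∑ x ∈ Finset.univ.filter (fun x => ℓ x ≤ lam), f x
        = (∑ x ∈ Finset.univ.filter (fun x => ℓ x < lam), f x)
          + ∑ x ∈ Finset.univ.filter (fun x => ℓ x = lam), f x := by
      intro f
      rw [← Finset.sum_filter_add_sum_filter_not
        (Finset.univ.filter (fun x => ℓ x ≤ lam)) (fun x => ℓ x < lam) f, hset1, hset2]
    have hsplit3 : ∀ f : X → ℝ, ∑ x, f x
        = (∑ x ∈ Finset.univ.filter (fun x => ℓ x < lam), f x)
          + (∑ x ∈ Finset.univ.filter (fun x => ℓ x = lam), f x)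
          + ∑ x ∈ Finset.univ.filter (fun x => lam < ℓ x), f x := by
      intro f
      rw [← Finset.sum_filter_add_sum_filter_not Finset.univ (fun x => ℓ x ≤ lam) f,
        hsplitle f, hset3]
    have habc : a + b + c = 1 := by rw [ha_def, hb_def, hc_def, ← hsplit3 Po, hPo1]
    have hab : ε ≤ a + b := by rw [ha_def, hb_def, ← hsplitle Po]; exact hquant
    have ha : a ≤ ε := by
      by_contra h
      push_neg at h
      have ha0 : a ≠ 0 := by intro h0; rw [h0] at h; linarith
      obtain ⟨x₁, hx₁, hx₁0⟩ := Finset.exists_ne_zero_of_sum_ne_zero ha0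
      simp only [Finset.mem_filter, Finset.mem_univ, true_and] at hx₁
      have hx₁pos : 0 < Po x₁ := lt_of_le_of_ne (hPo0 x₁) (Ne.symm hx₁0)
      set A := S.filter (fun x => ℓ x < lam) with hA
      have hAne : A.Nonempty :=
        ⟨x₁, Finset.mem_filter.mpr ⟨Finset.mem_filter.mpr ⟨Finset.mem_univ _, hx₁pos⟩, hx₁⟩⟩
      obtain ⟨x₂, hx₂A, hx₂⟩ := Finset.exists_mem_eq_sup' hAne ℓ
      set t := A.sup' hAne ℓ with ht
      have htlam : t < lam := by
        rw [hx₂]; exact (Finset.mem_filter.mp hx₂A).2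
      have htim : t ∈ S.image ℓ := by
        rw [hx₂]; exact Finset.mem_image_of_mem ℓ (Finset.mem_filter.mp hx₂A).1
      have hsum_t : ∑ x ∈ Finset.univ.filter (fun x => ℓ x ≤ t), Po x = a := by
        rw [ha_def]
        apply Finset.sum_subset
        · intro x hx
          simp only [Finset.mem_filter, Finset.mem_univ, true_and] at hx ⊢
          exact lt_of_le_of_lt hx htlam
        · intro x hx hx2
          simp only [Finset.mem_filter, Finset.mem_univ, true_and] at hx hx2
          apply hPoz
          intro hPx
          exact hx2 (Finset.le_sup' ℓ (Finset.mem_filter.mpr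
            ⟨Finset.mem_filter.mpr ⟨Finset.mem_univ _, hPx⟩, hx⟩))
      have htT : t ∈ T := Finset.mem_filter.mpr ⟨htim, by rw [hsum_t]; linarith⟩
      have := T.min'_le t htT
      rw [← hlam] at this
      linarith
    set r := (ε - a)/b with hr_def
    have hb0 : 0 < b := by
      have hx₀mem : x₀ ∈ Finset.univ.filter (fun x => ℓ x = lam) :=
        Finset.mem_filter.mpr ⟨Finset.mem_univ _, hx₀⟩
      calc (0:ℝ) < Po x₀ := hPox₀
        _ ≤ b := Finset.single_le_sum (fun x _ => hPo0 x) hx₀mem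
    have hr0 : 0 ≤ r := div_nonneg (by linarith) hb0.le
    have hr1 : r ≤ 1 := (div_le_one hb0).mpr (by linarith)
    have hrb : r * b = ε - a := by
      rw [hr_def]; field_simp
    set w : X → ℝ := fun x => if ℓ x < lam then 0 else if ℓ x = lam then 1 - r else 1 with hw_def
    have hw0 : ∀ x, 0 ≤ w x := by
      intro x; rw [hw_def]; dsimp only; split
      · norm_num
      · split <;> linarith
    have hw1 : ∀ x, w x ≤ 1 := by
      intro x; rw [hw_def]; dsimp only; split
      · norm_num
      · split <;> linarith
    set Q : X → ℝ := fun x => Po x * w x + (if x = xs then ε else 0) with hQ_def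
    have hite0 : ∀ x, 0 ≤ (if x = xs then ε else (0:ℝ)) := by
      intro x; split <;> simp [hε]
    have hPow : ∑ x, Po x * w x = 1 - ε := by
      have s1 : ∑ x ∈ Finset.univ.filter (fun x => ℓ x < lam), Po x * w x = 0 := by
        apply Finset.sum_eq_zero
        intro x hx
        simp only [Finset.mem_filter, Finset.mem_univ, true_and] at hx
        rw [hw_def]; dsimp only; rw [if_pos hx]; ring
      have s2 : ∑ x ∈ Finset.univ.filter (fun x => ℓ x = lam), Po x * w x = (1 - r) * b := by
        rw [hb_def, Finset.mul_sum]
        apply Finset.sum_congr rfl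
        intro x hx
        simp only [Finset.mem_filter, Finset.mem_univ, true_and] at hx
        rw [hw_def]; dsimp only; rw [if_neg (by rw [hx]; exact lt_irrefl _), if_pos hx]; ring
      have s3 : ∑ x ∈ Finset.univ.filter (fun x => lam < ℓ x), Po x * w x = c := by
        rw [hc_def]
        apply Finset.sum_congr rfl
        intro x hx
        simp only [Finset.mem_filter, Finset.mem_univ, true_and] at hx
        rw [hw_def]; dsimp only; rw [if_neg (by exact not_lt.mpr hx.le), if_neg (by exact ne_of_gt hx)]; ring
      rw [hsplit3 (fun x => Po x * w x), s1, s2, s3]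
      nlinarith [hrb, habc]
    have hitesum : ∑ x, (if x = xs then ε else (0:ℝ)) = ε := by
      simp
    refine ⟨lam, Q, ?_, ?_, ?_, ?_, ?_⟩
    · intro x
      exact add_nonneg (mul_nonneg (hPo0 x) (hw0 x)) (hite0 x)
    · rw [hQ_def]
      dsimp only
      rw [Finset.sum_add_distrib, hPow, hitesum]; ring
    · intro x hx
      by_contra h
      have hP0 : Po x = 0 := hPoz x h
      by_cases hxx : x = xs
      · rw [hxx] at hP0; linarith
      · rw [hQ_def] at hx; dsimp only at hx
        rw [hP0, if_neg hxx] at hx; simp at hx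
    · have hpt : ∀ x, |Q x - Po x| ≤ Po x * (1 - w x) + (if x = xs then ε else 0) := by
        intro x
        have h1 : 0 ≤ Po x * (1 - w x) := mul_nonneg (hPo0 x) (by linarith [hw1 x])
        have h2 : Q x - Po x = (if x = xs then ε else 0) - Po x * (1 - w x) := by
          rw [hQ_def]; dsimp only; ring
        rw [h2, abs_le]
        constructor
        · nlinarith [hite0 x]
        · nlinarith [hite0 x]
      have hsum : ∑ x, |Q x - Po x| ≤ ∑ x, (Po x * (1 - w x) + (if x = xs then ε else 0)) :=
        Finset.sum_le_sum (fun x _ => hpt x)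
      have hsum2 : ∑ x, (Po x * (1 - w x) + (if x = xs then ε else 0)) = 2 * ε := by
        rw [Finset.sum_add_distrib, hitesum]
        have : ∑ x, Po x * (1 - w x) = ∑ x, (Po x - Po x * w x) := by
          apply Finset.sum_congr rfl; intro x _; ring
        rw [this, Finset.sum_sub_distrib, hPo1, hPow]; ring
      rw [hsum2] at hsum
      linarith
    · -- value
      have hQl : ∑ x, Q x * ℓ x = (∑ x, Po x * w x * ℓ x) + ε * M := by
        rw [hQ_def]
        dsimp only
        have : ∀ x, (Po x * w x + (if x = xs then ε else 0)) * ℓ x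
            = Po x * w x * ℓ x + (if x = xs then ε * ℓ x else 0) := by
          intro x; split <;> ring
        rw [Finset.sum_congr rfl (fun x _ => this x), Finset.sum_add_distrib]
        simp [hMxs]
      have hpt2 : ∀ x, Po x * w x * (ℓ x - lam) = Po x * max (ℓ x - lam) 0 := by
        intro x
        rcases lt_trichotomy (ℓ x) lam with h | h | h
        · rw [hw_def]; dsimp only; rw [if_pos h, max_eq_right (by linarith)]; ring
        · rw [h]; simp
        · rw [hw_def]; dsimp only
          rw [if_neg (not_lt.mpr h.le), if_neg (ne_of_gt h), max_eq_left (by linarith)]; ring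
      have hPowl : ∑ x, Po x * w x * ℓ x
          = (∑ x, Po x * max (ℓ x - lam) 0) + lam * (1 - ε) := by
        have : ∀ x, Po x * w x * ℓ x = Po x * w x * (ℓ x - lam) + lam * (Po x * w x) := by
          intro x; ring
        rw [Finset.sum_congr rfl (fun x _ => this x), Finset.sum_add_distrib,
          Finset.sum_congr rfl (fun x _ => hpt2 x), ← Finset.mul_sum, hPow]
      rw [hQl, hPowl, max_eq_left (by linarith)]
      ring

/-- Strong duality (Lemma on TV duality): the robust value
`sup_{Q} E_Q[ℓ]` over the TV ball around `P_o` (restricted to the support of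
`P_o`) equals `inf_λ g(λ)`, and the infimum is attained. -/
theorem stmt8 {X : Type*} [Fintype X]
    (Po : X → ℝ) (hPo0 : ∀ x, 0 ≤ Po x) (hPo1 : ∑ x, Po x = 1)
    (hne : (Finset.univ.filter fun x => 0 < Po x).Nonempty)
    (ℓ : X → ℝ) (ε : ℝ) (hε : 0 ≤ ε)
    (M : ℝ) (hM : M = (Finset.univ.filter fun x => 0 < Po x).sup' hne ℓ) :
    sSup {v : ℝ | ∃ Q : X → ℝ, (∀ x, 0 ≤ Q x) ∧ (∑ x, Q x = 1) ∧
        (∀ x, 0 < Q x → 0 < Po x) ∧ (1/2) * ∑ x, |Q x - Po x| ≤ ε ∧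
        v = ∑ x, Q x * ℓ x} =
      sInf (Set.range fun lam : ℝ =>
        (∑ x, Po x * max (ℓ x - lam) 0) + ε * max (M - lam) 0 + lam) ∧
    ∃ lam : ℝ,
      (∑ x, Po x * max (ℓ x - lam) 0) + ε * max (M - lam) 0 + lam =
        sInf (Set.range fun lam : ℝ =>
          (∑ x, Po x * max (ℓ x - lam) 0) + ε * max (M - lam) 0 + lam) := by
  classical
  set g : ℝ → ℝ := fun lam =>
    (∑ x, Po x * max (ℓ x - lam) 0) + ε * max (M - lam) 0 + lam with hg
  have hℓM : ∀ x, 0 < Po x → ℓ x ≤ M := by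
    intro x hx
    rw [hM]
    exact Finset.le_sup' ℓ (Finset.mem_filter.mpr ⟨Finset.mem_univ _, hx⟩)
  have hPoz : ∀ x, ¬ 0 < Po x → Po x = 0 := fun x h => le_antisymm (not_lt.mp h) (hPo0 x)
  set m := (Finset.univ.filter fun x => 0 < Po x).inf' hne ℓ with hm
  have hmM : m ≤ M := by
    obtain ⟨x, hx⟩ := hne
    exact le_trans (Finset.inf'_le ℓ hx) (hℓM x (Finset.mem_filter.mp hx).2)
  have hg_cont : Continuous g := by
    apply Continuous.add
    apply Continuous.add
    · apply continuous_finset_sum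
      intro x _
      exact continuous_const.mul ((continuous_const.sub continuous_id).max continuous_const)
    · exact continuous_const.mul ((continuous_const.sub continuous_id).max continuous_const)
    · exact continuous_id
  obtain ⟨lam₀, hlam₀mem, hmin⟩ :=
    (isCompact_Icc (a := m) (b := M)).exists_isMinOn ⟨M, by simp [hmM]⟩ hg_cont.continuousOn
  rw [isMinOn_iff] at hmin
  have hgeM : ∀ t, M ≤ t → g t = t := by
    intro t ht
    have hz : ∑ x, Po x * max (ℓ x - t) 0 = 0 := by
      apply Finset.sum_eq_zero
      intro x _
      rcases lt_or_ge 0 (Po x) with h | h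
      · rw [max_eq_right (by linarith [hℓM x h])]; ring
      · rw [hPoz x (not_lt.mpr h)]; ring
    rw [hg]; dsimp only
    rw [hz, max_eq_right (by linarith)]; ring
  have hlem : ∀ t, t ≤ m → g t = (∑ x, Po x * ℓ x) + ε * M - ε * t := by
    intro t ht
    have hz : ∑ x, Po x * max (ℓ x - t) 0 = (∑ x, Po x * ℓ x) - t := by
      have : ∀ x, Po x * max (ℓ x - t) 0 = Po x * ℓ x - Po x * t := by
        intro x
        rcases lt_or_ge 0 (Po x) with h | h
        · have hxm : m ≤ ℓ x :=
            Finset.inf'_le ℓ (Finset.mem_filter.mpr ⟨Finset.mem_univ _, h⟩)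
          rw [max_eq_left (by linarith)]; ring
        · rw [hPoz x (not_lt.mpr h)]; ring
      rw [Finset.sum_congr rfl (fun x _ => this x), Finset.sum_sub_distrib,
        ← Finset.sum_mul, hPo1]; ring
    rw [hg]; dsimp only
    rw [hz, max_eq_left (by linarith)]; ring
  have hminAll : ∀ t, g lam₀ ≤ g t := by
    intro t
    rcases le_or_gt t m with h | h
    · have h1 : g lam₀ ≤ g m := hmin m (by simp [hmM])
      rw [hlem m le_rfl] at h1
      rw [hlem t h]
      nlinarith
    · rcases le_or_gt t M with h2 | h2
      · exact hmin t (by constructor <;> [linarith; linarith])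
      · have h1 : g lam₀ ≤ g M := hmin M (by simp [hmM])
        rw [hgeM M le_rfl] at h1
        rw [hgeM t h2.le]
        linarith
  -- weak duality applies to every feasible Q
  have hPoTV : (1/2 : ℝ) * ∑ x, |Po x - Po x| ≤ ε := by simp [hε]
  have hPoval : ∀ t, ∑ x, Po x * ℓ x ≤ g t := fun t =>
    wd8 Po Po ℓ ε M t hPo0 hPo1 hPo0 hPo1 (fun x h => h) hPoTV hℓM
  have hInfEq : sInf (Set.range g) = g lam₀ := by
    apply le_antisymm
    · exact csInf_le ⟨∑ x, Po x * ℓ x, by rintro y ⟨t, rfl⟩; exact hPoval t⟩ ⟨lam₀, rfl⟩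
    · exact le_csInf ⟨g 0, ⟨0, rfl⟩⟩ (by rintro y ⟨t, rfl⟩; exact hminAll t)
  set A := {v : ℝ | ∃ Q : X → ℝ, (∀ x, 0 ≤ Q x) ∧ (∑ x, Q x = 1) ∧
      (∀ x, 0 < Q x → 0 < Po x) ∧ (1/2) * ∑ x, |Q x - Po x| ≤ ε ∧
      v = ∑ x, Q x * ℓ x} with hA
  have hAne : (∑ x, Po x * ℓ x) ∈ A :=
    ⟨Po, hPo0, hPo1, fun x h => h, hPoTV, rfl⟩
  have hAub : ∀ v ∈ A, v ≤ g lam₀ := by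
    rintro v ⟨Q, hQ0, hQ1, hQs, hQTV, rfl⟩
    exact wd8 Po Q ℓ ε M lam₀ hPo0 hPo1 hQ0 hQ1 hQs hQTV hℓM
  obtain ⟨lam₁, Q₁, hQ₁0, hQ₁1, hQ₁s, hQ₁TV, hQ₁val⟩ :=
    constr8 Po hPo0 hPo1 hne ℓ ε hε M hM
  have hQ₁A : (∑ x, Q₁ x * ℓ x) ∈ A := ⟨Q₁, hQ₁0, hQ₁1, hQ₁s, hQ₁TV, rfl⟩
  constructor
  · apply le_antisymm
    · apply csSup_le ⟨_, hAne⟩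
      intro v hv
      rw [hInfEq]
      exact hAub v hv
    · have h1 : sInf (Set.range g) ≤ g lam₁ :=
        csInf_le ⟨∑ x, Po x * ℓ x, by rintro y ⟨t, rfl⟩; exact hPoval t⟩ ⟨lam₁, rfl⟩
      have h2 : (∑ x, Q₁ x * ℓ x) ≤ sSup A := le_csSup ⟨g lam₀, hAub⟩ hQ₁A
      have h3 : g lam₁ = ∑ x, Q₁ x * ℓ x := hQ₁val.symm
      linarith
  · exact ⟨lam₀, hInfEq.symm⟩
end

section
/- Let S and A be finite sets, let π be a policy, let T^o be a transition kernel, let μ be an initial distribution on S, and let γ ∈ [0,1). Let T be a transition kernel with D_TV(T(·|s,a), T^o(·|s,a)) ≤ ε' for all (s,a), and suppose the joint occupancy ρ^π_{T^o}(s,a,s') := π(a|s)·ρ^π_{T^o}(s)·T^o(s'|s,a) is strictly positive everywhere. Then the SoftTV f-divergence satisfies D_{f_SoftTV}(ρ^π_T(·,·,·) ‖ ρ^π_{T^o}(·,·,·)) ≤ ε'/(1 − γ), where ρ^π_T(s,a,s') := π(a|s)·ρ^π_T(s)·T(s'|s,a). -/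
open Finset

/-- The SoftTV generator. -/
noncomputable def fSoftTV (x : ℝ) : ℝ := (1/2) * Real.log (Real.cosh (x - 1))

lemma logCosh_le_abs (y : ℝ) : Real.log (Real.cosh y) ≤ |y| := by
  have h1 : Real.cosh y ≤ Real.exp |y| := by
    rw [Real.cosh_eq]
    have h2 := Real.exp_le_exp.mpr (le_abs_self y)
    have h3 := Real.exp_le_exp.mpr (neg_le_abs y)
    linarith
  calc Real.log (Real.cosh y) ≤ Real.log (Real.exp |y|) :=
        Real.log_le_log (Real.cosh_pos y) h1
    _ = |y| := Real.log_exp _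

lemma fSoftTV_le (x : ℝ) : fSoftTV x ≤ |x - 1| / 2 := by
  have := logCosh_le_abs (x - 1)
  unfold fSoftTV; linarith

set_option linter.unusedSectionVars false

section aux
variable {S : Type*} [Fintype S] [DecidableEq S]

lemma vecMul_nonneg' {ν : S → ℝ} {M : Matrix S S ℝ}
    (hν : ∀ s, 0 ≤ ν s) (hM : ∀ s s', 0 ≤ M s s') (s' : S) :
    0 ≤ Matrix.vecMul ν M s' := by
  simp only [Matrix.vecMul, dotProduct]
  exact Finset.sum_nonneg fun s _ => mul_nonneg (hν s) (hM s s')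

lemma vecMul_sum' {ν : S → ℝ} {M : Matrix S S ℝ}
    (hM : ∀ s, ∑ s', M s s' = 1) :
    ∑ s', Matrix.vecMul ν M s' = ∑ s, ν s := by
  simp only [Matrix.vecMul, dotProduct]
  rw [Finset.sum_comm]
  simp [← Finset.mul_sum, hM]

/-- `μ Mᵗ` stays a probability vector. -/
lemma pow_prob {μ : S → ℝ} {M : Matrix S S ℝ}
    (hμ0 : ∀ s, 0 ≤ μ s) (hμ1 : ∑ s, μ s = 1)
    (hM0 : ∀ s s', 0 ≤ M s s') (hM1 : ∀ s, ∑ s', M s s' = 1) (t : ℕ) :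
    (∀ s, 0 ≤ Matrix.vecMul μ (M ^ t) s) ∧ ∑ s, Matrix.vecMul μ (M ^ t) s = 1 := by
  induction t with
  | zero => simpa [Matrix.vecMul_one] using ⟨hμ0, hμ1⟩
  | succ t ih =>
    have h : Matrix.vecMul μ (M ^ (t+1)) = Matrix.vecMul (Matrix.vecMul μ (M ^ t)) M := by
      rw [Matrix.vecMul_vecMul, ← pow_succ]
    constructor
    · intro s; rw [h]; exact vecMul_nonneg' ih.1 hM0 s
    · rw [h, vecMul_sum' hM1, ih.2]

/-- ℓ¹ error growth for powers of two stochastic matrices. -/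
lemma pow_l1_diff {μ : S → ℝ} {M N : Matrix S S ℝ} {δ : ℝ}
    (hμ0 : ∀ s, 0 ≤ μ s) (hμ1 : ∑ s, μ s = 1)
    (hM0 : ∀ s s', 0 ≤ M s s') (hM1 : ∀ s, ∑ s', M s s' = 1)
    (hN0 : ∀ s s', 0 ≤ N s s') (hN1 : ∀ s, ∑ s', N s s' = 1)
    (hrow : ∀ s, ∑ s', |M s s' - N s s'| ≤ δ) (t : ℕ) :
    ∑ s, |Matrix.vecMul μ (M ^ t) s - Matrix.vecMul μ (N ^ t) s| ≤ δ * t := by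
  induction t with
  | zero => simp [Matrix.vecMul_one]
  | succ t ih =>
    set a := Matrix.vecMul μ (M ^ t) with ha
    set b := Matrix.vecMul μ (N ^ t) with hb
    have hM' : Matrix.vecMul μ (M ^ (t+1)) = Matrix.vecMul a M := by
      rw [ha, Matrix.vecMul_vecMul, ← pow_succ]
    have hN' : Matrix.vecMul μ (N ^ (t+1)) = Matrix.vecMul b N := by
      rw [hb, Matrix.vecMul_vecMul, ← pow_succ]
    have hap := pow_prob hμ0 hμ1 hM0 hM1 t
    have hdec : ∀ s', Matrix.vecMul a M s' - Matrix.vecMul b N s' =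
        (∑ s, (a s - b s) * N s s') + ∑ s, a s * (M s s' - N s s') := by
      intro s'
      simp only [Matrix.vecMul, dotProduct, ← Finset.sum_add_distrib,
        ← Finset.sum_sub_distrib]
      apply Finset.sum_congr rfl; intro s _; ring
    have key : ∑ s', |Matrix.vecMul a M s' - Matrix.vecMul b N s'| ≤
        (∑ s, |a s - b s|) + δ := by
      calc ∑ s', |Matrix.vecMul a M s' - Matrix.vecMul b N s'|
          ≤ ∑ s', ((∑ s, |a s - b s| * N s s') + ∑ s, a s * |M s s' - N s s'|) := by
            apply Finset.sum_le_sum; intro s' _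
            rw [hdec s']
            refine (abs_add_le _ _).trans (add_le_add ?_ ?_)
            · refine (Finset.abs_sum_le_sum_abs _ _).trans (le_of_eq ?_)
              apply Finset.sum_congr rfl; intro s _
              rw [abs_mul, abs_of_nonneg (hN0 s s')]
            · refine (Finset.abs_sum_le_sum_abs _ _).trans (le_of_eq ?_)
              apply Finset.sum_congr rfl; intro s _
              rw [abs_mul, abs_of_nonneg (hap.1 s)]
        _ = (∑ s, |a s - b s| * ∑ s', N s s') + ∑ s, a s * ∑ s', |M s s' - N s s'| := by
            rw [Finset.sum_add_distrib, Finset.sum_comm (s := Finset.univ),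
              Finset.sum_comm (s := Finset.univ) (f := fun s' s => a s * |M s s' - N s s'|)]
            simp [Finset.mul_sum]
        _ ≤ (∑ s, |a s - b s|) + ∑ s, a s * δ := by
            refine add_le_add (le_of_eq ?_) ?_
            · apply Finset.sum_congr rfl; intro s _; rw [hN1 s, mul_one]
            · exact Finset.sum_le_sum fun s _ =>
                mul_le_mul_of_nonneg_left (hrow s) (hap.1 s)
        _ = (∑ s, |a s - b s|) + δ := by rw [← Finset.sum_mul, hap.2, one_mul]
    rw [hM', hN']
    calc ∑ s', |Matrix.vecMul a M s' - Matrix.vecMul b N s'|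
        ≤ (∑ s, |a s - b s|) + δ := key
      _ ≤ δ * t + δ := by linarith
      _ = δ * ((t + 1 : ℕ) : ℝ) := by push_cast; ring
end aux

/-- SoftTV f-divergence bound between the joint occupancy measures under
perturbed transition kernels:
`D_{f_SoftTV}(ρ^π_T ‖ ρ^π_{T^o}) ≤ ε'/(1-γ)`. -/
theorem stmt16 {S A : Type*} [Fintype S] [DecidableEq S] [Fintype A]
    (π : S → A → ℝ) (hπ0 : ∀ s a, 0 ≤ π s a) (hπ1 : ∀ s, ∑ a, π s a = 1)
    (To : S → A → S → ℝ) (hTo0 : ∀ s a s', 0 ≤ To s a s')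
    (hTo1 : ∀ s a, ∑ s', To s a s' = 1)
    (μ : S → ℝ) (hμ0 : ∀ s, 0 ≤ μ s) (hμ1 : ∑ s, μ s = 1)
    (γ : ℝ) (hγ0 : 0 ≤ γ) (hγ1 : γ < 1) (ε' : ℝ)
    (T : S → A → S → ℝ) (hT0 : ∀ s a s', 0 ≤ T s a s')
    (hT1 : ∀ s a, ∑ s', T s a s' = 1)
    (hTV : ∀ s a, (1/2) * ∑ s', |T s a s' - To s a s'| ≤ ε')
    (hpos : ∀ x : S × A × S,
      0 < π x.1 x.2.1 * occ π To μ γ x.1 * To x.1 x.2.1 x.2.2) :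
    ∑ x : S × A × S,
        (π x.1 x.2.1 * occ π To μ γ x.1 * To x.1 x.2.1 x.2.2) *
          fSoftTV ((π x.1 x.2.1 * occ π T μ γ x.1 * T x.1 x.2.1 x.2.2) /
            (π x.1 x.2.1 * occ π To μ γ x.1 * To x.1 x.2.1 x.2.2)) ≤
      ε' / (1 - γ) := by
  have hγ1' : 0 < 1 - γ := by linarith
  have hγn : ‖γ‖ < 1 := by rw [Real.norm_eq_abs, abs_of_nonneg hγ0]; exact hγ1
  -- S, A nonempty, ε' ≥ 0
  have hSne : Nonempty S := by
    by_contra h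
    rw [not_nonempty_iff] at h
    simp [Finset.univ_eq_empty] at hμ1
  obtain ⟨s₀⟩ := hSne
  have hAne : Nonempty A := by
    by_contra h
    rw [not_nonempty_iff] at h
    have := hπ1 s₀
    simp [Finset.univ_eq_empty] at this
  obtain ⟨a₀⟩ := hAne
  have hε : 0 ≤ ε' := le_trans (by positivity) (hTV s₀ a₀)
  -- stochasticity of Pmat
  have hP0 : ∀ s s', 0 ≤ Pmat π T s s' := fun s s' =>
    Finset.sum_nonneg fun a _ => mul_nonneg (hπ0 s a) (hT0 s a s')
  have hPo0 : ∀ s s', 0 ≤ Pmat π To s s' := fun s s' =>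
    Finset.sum_nonneg fun a _ => mul_nonneg (hπ0 s a) (hTo0 s a s')
  have hP1 : ∀ s, ∑ s', Pmat π T s s' = 1 := by
    intro s
    simp only [Pmat, Matrix.of_apply]
    rw [Finset.sum_comm]
    simp [← Finset.mul_sum, hT1, hπ1]
  have hPo1 : ∀ s, ∑ s', Pmat π To s s' = 1 := by
    intro s
    simp only [Pmat, Matrix.of_apply]
    rw [Finset.sum_comm]
    simp [← Finset.mul_sum, hTo1, hπ1]
  have hrow : ∀ s, ∑ s', |Pmat π T s s' - Pmat π To s s'| ≤ 2 * ε' := by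
    intro s
    calc ∑ s', |Pmat π T s s' - Pmat π To s s'|
        ≤ ∑ s', ∑ a, π s a * |T s a s' - To s a s'| := by
          apply Finset.sum_le_sum; intro s' _
          simp only [Pmat, Matrix.of_apply, ← Finset.sum_sub_distrib]
          refine (Finset.abs_sum_le_sum_abs _ _).trans (le_of_eq ?_)
          apply Finset.sum_congr rfl; intro a _
          rw [show π s a * T s a s' - π s a * To s a s' = π s a * (T s a s' - To s a s')
            by ring, abs_mul, abs_of_nonneg (hπ0 s a)]
      _ = ∑ a, π s a * ∑ s', |T s a s' - To s a s'| := by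
          rw [Finset.sum_comm]; simp [Finset.mul_sum]
      _ ≤ ∑ a, π s a * (2 * ε') := by
          refine Finset.sum_le_sum fun a _ => mul_le_mul_of_nonneg_left ?_ (hπ0 s a)
          have := hTV s a; linarith
      _ = 2 * ε' := by rw [← Finset.sum_mul, hπ1, one_mul]
  -- abbreviations
  set a : ℕ → S → ℝ := fun t => Matrix.vecMul μ (Pmat π T ^ t) with ha
  set b : ℕ → S → ℝ := fun t => Matrix.vecMul μ (Pmat π To ^ t) with hb
  have hap : ∀ t, (∀ s, 0 ≤ a t s) ∧ ∑ s, a t s = 1 := pow_prob hμ0 hμ1 hP0 hP1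
  have hbp : ∀ t, (∀ s, 0 ≤ b t s) ∧ ∑ s, b t s = 1 := pow_prob hμ0 hμ1 hPo0 hPo1
  have he : ∀ t, ∑ s, |a t s - b t s| ≤ 2 * ε' * t :=
    pow_l1_diff hμ0 hμ1 hP0 hP1 hPo0 hPo1 hrow
  -- summability
  have hgeom : Summable fun t : ℕ => γ ^ t := summable_geometric_of_lt_one hγ0 hγ1
  have hsum_a : ∀ s, Summable fun t => γ ^ t * a t s := by
    intro s
    apply Summable.of_nonneg_of_le (fun t => mul_nonneg (pow_nonneg hγ0 t) ((hap t).1 s))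
      (fun t => ?_) hgeom
    have h1 : a t s ≤ 1 := by
      have h2 : a t s ≤ ∑ s', a t s' :=
        Finset.single_le_sum (fun s' _ => (hap t).1 s') (Finset.mem_univ s)
      rw [(hap t).2] at h2; exact h2
    simpa using mul_le_mul_of_nonneg_left h1 (pow_nonneg hγ0 t)
  have hsum_b : ∀ s, Summable fun t => γ ^ t * b t s := by
    intro s
    apply Summable.of_nonneg_of_le (fun t => mul_nonneg (pow_nonneg hγ0 t) ((hbp t).1 s))
      (fun t => ?_) hgeom
    have h1 : b t s ≤ 1 := by
      have h2 : b t s ≤ ∑ s', b t s' :=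
        Finset.single_le_sum (fun s' _ => (hbp t).1 s') (Finset.mem_univ s)
      rw [(hbp t).2] at h2; exact h2
    simpa using mul_le_mul_of_nonneg_left h1 (pow_nonneg hγ0 t)
  have hsum_d : ∀ s, Summable fun t => γ ^ t * |a t s - b t s| := by
    intro s
    have : (fun t => γ ^ t * |a t s - b t s|)
        = fun t => |γ ^ t * a t s - γ ^ t * b t s| := by
      funext t
      rw [← mul_sub, abs_mul, abs_of_nonneg (pow_nonneg hγ0 t)]
    rw [this]
    exact ((hsum_a s).sub (hsum_b s)).abs
  -- occupancy facts
  have hoccT0 : ∀ s, 0 ≤ occ π T μ γ s := by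
    intro s
    unfold occ
    exact mul_nonneg (le_of_lt hγ1')
      (tsum_nonneg fun t => mul_nonneg (pow_nonneg hγ0 t) ((hap t).1 s))
  have hoccT1 : ∑ s, occ π T μ γ s = 1 := by
    unfold occ
    rw [← Finset.mul_sum, ← Summable.tsum_finsetSum (fun s _ => hsum_a s)]
    have : ∀ t : ℕ, ∑ s, γ ^ t * a t s = γ ^ t := by
      intro t; rw [← Finset.mul_sum, (hap t).2, mul_one]
    rw [tsum_congr this, tsum_geometric_of_lt_one hγ0 hγ1]
    field_simp
  -- TV between state occupancies
  have hstv : ∑ s, |occ π T μ γ s - occ π To μ γ s| ≤ 2 * ε' * γ / (1 - γ) := by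
    have hdiff : ∀ s, |occ π T μ γ s - occ π To μ γ s| ≤
        (1 - γ) * ∑' t, γ ^ t * |a t s - b t s| := by
      intro s
      unfold occ
      rw [← mul_sub, ← Summable.tsum_sub (hsum_a s) (hsum_b s), abs_mul,
        abs_of_nonneg (le_of_lt hγ1')]
      apply mul_le_mul_of_nonneg_left _ (le_of_lt hγ1')
      have h1 : |∑' t, (γ ^ t * a t s - γ ^ t * b t s)| ≤
          ∑' t, |γ ^ t * a t s - γ ^ t * b t s| := by
        simpa using norm_tsum_le_tsum_norm (f := fun t => γ ^ t * a t s - γ ^ t * b t s)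
          (by simpa [Real.norm_eq_abs] using ((hsum_a s).sub (hsum_b s)).abs)
      refine h1.trans (le_of_eq (tsum_congr fun t => ?_))
      rw [← mul_sub, abs_mul, abs_of_nonneg (pow_nonneg hγ0 t)]
    have hsum_t : Summable fun t : ℕ => (2 * ε') * ((t : ℝ) * γ ^ t) := by
      apply Summable.mul_left
      have := summable_pow_mul_geometric_of_norm_lt_one 1 hγn
      simpa using this
    calc ∑ s, |occ π T μ γ s - occ π To μ γ s|
        ≤ ∑ s, (1 - γ) * ∑' t, γ ^ t * |a t s - b t s| :=
          Finset.sum_le_sum fun s _ => hdiff s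
      _ = (1 - γ) * ∑' t, ∑ s, γ ^ t * |a t s - b t s| := by
          rw [← Finset.mul_sum, Summable.tsum_finsetSum (fun s _ => hsum_d s)]
      _ ≤ (1 - γ) * ∑' t : ℕ, (2 * ε') * ((t : ℝ) * γ ^ t) := by
          apply mul_le_mul_of_nonneg_left _ (le_of_lt hγ1')
          apply Summable.tsum_le_tsum _ _ hsum_t
          · intro t
            rw [← Finset.mul_sum]
            calc γ ^ t * ∑ s, |a t s - b t s| ≤ γ ^ t * (2 * ε' * t) :=
                  mul_le_mul_of_nonneg_left (he t) (pow_nonneg hγ0 t)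
              _ = 2 * ε' * (t * γ ^ t) := by ring
          · apply Summable.of_nonneg_of_le (fun t => ?_) (fun t => ?_) hsum_t
            · rw [← Finset.mul_sum]
              exact mul_nonneg (pow_nonneg hγ0 t)
                (Finset.sum_nonneg fun s _ => abs_nonneg _)
            · rw [← Finset.mul_sum]
              calc γ ^ t * ∑ s, |a t s - b t s| ≤ γ ^ t * (2 * ε' * t) :=
                    mul_le_mul_of_nonneg_left (he t) (pow_nonneg hγ0 t)
                _ = 2 * ε' * (t * γ ^ t) := by ring
      _ = (1 - γ) * ((2 * ε') * (γ / (1 - γ) ^ 2)) := by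
          rw [tsum_mul_left, tsum_coe_mul_geometric_of_norm_lt_one hγn]
      _ = 2 * ε' * γ / (1 - γ) := by field_simp
  -- pointwise bound then TV bound on joint
  set p : S × A × S → ℝ := fun x => π x.1 x.2.1 * occ π T μ γ x.1 * T x.1 x.2.1 x.2.2 with hp
  set q : S × A × S → ℝ := fun x => π x.1 x.2.1 * occ π To μ γ x.1 * To x.1 x.2.1 x.2.2 with hq
  have hptwise : ∀ x, q x * fSoftTV (p x / q x) ≤ |p x - q x| / 2 := by
    intro x
    have hqx : 0 < q x := hpos x
    have h1 : fSoftTV (p x / q x) ≤ |p x / q x - 1| / 2 := fSoftTV_le _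
    have h2 : q x * (|p x / q x - 1| / 2) = |p x - q x| / 2 := by
      rw [show p x / q x - 1 = (p x - q x) / q x by field_simp, abs_div,
        abs_of_pos hqx]
      field_simp
    calc q x * fSoftTV (p x / q x) ≤ q x * (|p x / q x - 1| / 2) :=
          mul_le_mul_of_nonneg_left h1 (le_of_lt hqx)
      _ = |p x - q x| / 2 := h2
  have hjointTV : ∑ x : S × A × S, |p x - q x| ≤ 2 * ε' + 2 * ε' * γ / (1 - γ) := by
    calc ∑ x : S × A × S, |p x - q x|
        = ∑ s, ∑ a', ∑ s', |p (s, a', s') - q (s, a', s')| := by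
          rw [Fintype.sum_prod_type]
          exact Finset.sum_congr rfl fun s _ => Fintype.sum_prod_type _
      _ ≤ ∑ s, ∑ a', ∑ s',
            (π s a' * occ π T μ γ s * |T s a' s' - To s a' s'| +
             π s a' * |occ π T μ γ s - occ π To μ γ s| * To s a' s') := by
          refine Finset.sum_le_sum fun s _ => Finset.sum_le_sum fun a' _ =>
            Finset.sum_le_sum fun s' _ => ?_
          have hd : p (s, a', s') - q (s, a', s') =
              π s a' * occ π T μ γ s * (T s a' s' - To s a' s') +
              π s a' * (occ π T μ γ s - occ π To μ γ s) * To s a' s' := by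
            simp only [hp, hq]; ring
          rw [hd]
          refine (abs_add_le _ _).trans (le_of_eq ?_)
          rw [abs_mul, abs_mul, abs_mul, abs_mul,
            abs_of_nonneg (hπ0 s a'), abs_of_nonneg (hoccT0 s),
            abs_of_nonneg (hTo0 s a' s')]
      _ = ∑ s, (occ π T μ γ s * ∑ a', π s a' * ∑ s', |T s a' s' - To s a' s'|) +
          ∑ s, |occ π T μ γ s - occ π To μ γ s| := by
          rw [← Finset.sum_add_distrib]
          refine Finset.sum_congr rfl fun s _ => ?_
          have e1 : ∑ a' : A, ∑ s', π s a' * occ π T μ γ s * |T s a' s' - To s a' s'|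
              = occ π T μ γ s * ∑ a', π s a' * ∑ s', |T s a' s' - To s a' s'| := by
            rw [Finset.mul_sum]
            refine Finset.sum_congr rfl fun a' _ => ?_
            rw [Finset.mul_sum, Finset.mul_sum]
            exact Finset.sum_congr rfl fun s' _ => by ring
          have e2 : ∑ a' : A, ∑ s',
              π s a' * |occ π T μ γ s - occ π To μ γ s| * To s a' s'
              = |occ π T μ γ s - occ π To μ γ s| := by
            have h3 : ∀ a' : A, ∑ s',
                π s a' * |occ π T μ γ s - occ π To μ γ s| * To s a' s'
                = π s a' * |occ π T μ γ s - occ π To μ γ s| := by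
              intro a'; rw [← Finset.mul_sum, hTo1 s a', mul_one]
            rw [Finset.sum_congr rfl fun a' _ => h3 a', ← Finset.sum_mul, hπ1 s, one_mul]
          simp only [Finset.sum_add_distrib]
          rw [e1, e2]
      _ ≤ ∑ s, (occ π T μ γ s * (2 * ε')) + 2 * ε' * γ / (1 - γ) := by
          refine add_le_add (Finset.sum_le_sum fun s _ => ?_) hstv
          refine mul_le_mul_of_nonneg_left ?_ (hoccT0 s)
          calc ∑ a', π s a' * ∑ s', |T s a' s' - To s a' s'|
              ≤ ∑ a', π s a' * (2 * ε') := by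
                refine Finset.sum_le_sum fun a' _ => mul_le_mul_of_nonneg_left ?_ (hπ0 s a')
                have := hTV s a'; linarith
            _ = 2 * ε' := by rw [← Finset.sum_mul, hπ1, one_mul]
      _ = 2 * ε' + 2 * ε' * γ / (1 - γ) := by
          rw [← Finset.sum_mul, hoccT1, one_mul]
  calc ∑ x : S × A × S, q x * fSoftTV (p x / q x)
      ≤ ∑ x : S × A × S, |p x - q x| / 2 := Finset.sum_le_sum fun x _ => hptwise x
    _ = (∑ x : S × A × S, |p x - q x|) / 2 := by rw [Finset.sum_div]
    _ ≤ (2 * ε' + 2 * ε' * γ / (1 - γ)) / 2 := by linarith [hjointTV]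
    _ = ε' / (1 - γ) := by field_simp; ring
end
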